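/- Let 1 < p < ∞ and ω ∈ D̂, and let p' = p/(p-1). Then ∫_0^1 (1-r)^{p'} / ω̂(r)^{p'-1} dr = ∞ if and only if Σ_{k=0}^∞ 1/((k+1)^{2+p'} ω_k^{p'-1}) = ∞, where ω_k = ∫_0^1 s^k ω(s) ds. -/

import Mathlib

/-!
Cut `[0, 1)` at the points `r_k = 1 - 1/(k+1)`. On `[r_k, r_{k+1})` the factor `1 - r` is
comparable to `1/(k+1)`, the length of the interval to `1/(k+1)^2`, and, by the doubling
condition, `ω̂` to `ω̂(r_k)`. Hence `∫ (1-r)^a / ω̂(r)^b` converges iff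
`∑ 1 / ((k+1)^(2+a) ω̂(r_k)^b)` does, and it remains to see `ω_k ≍ ω̂(r_k)`. From below,
`ω_k ≥ r_k^k ω̂(r_k) ≥ ω̂(r_k) / 3`. From above, cut `(0, 1]` at the dyadic points `1 - 2^(-j)`:
the piece at dyadic distance `i` to the left of `r_k` contributes at most
`e^(-2^i/2) C^(i+2) ω̂(r_k)`, and these bounds are summable in `i`.
-/

open MeasureTheory Set Filter

lemma summable_pow_mul_exp_neg_two_pow {C : ℝ} (hC : 0 ≤ C) :
    Summable fun i : ℕ => C ^ i * Real.exp (-2 ^ i / 2) := by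
  have hdecay : Tendsto (fun i : ℕ => C * Real.exp (-2 ^ i / 2)) atTop (nhds 0) := by
    have h2 : Tendsto (fun i : ℕ => -(2:ℝ) ^ i / 2) atTop atBot :=
      (tendsto_neg_atTop_atBot.comp (tendsto_pow_atTop_atTop_of_one_lt one_lt_two)).atBot_div_const
        two_pos
    simpa using (Real.tendsto_exp_atBot.comp h2).const_mul C
  refine summable_of_ratio_norm_eventually_le (r := 1 / 2) (by norm_num) ?_
  filter_upwards [hdecay.eventually_le_const (by norm_num : (0:ℝ) < 1 / 2)] with i hi
  have hexp : Real.exp (-2 ^ (i + 1) / 2) = Real.exp (-2 ^ i / 2) * Real.exp (-2 ^ i / 2) := by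
    rw [← Real.exp_add]; ring_nf
  rw [Real.norm_of_nonneg (by positivity), Real.norm_of_nonneg (by positivity), hexp]
  calc C ^ (i + 1) * (Real.exp (-2 ^ i / 2) * Real.exp (-2 ^ i / 2))
      = C * Real.exp (-2 ^ i / 2) * (C ^ i * Real.exp (-2 ^ i / 2)) := by ring
    _ ≤ 1 / 2 * (C ^ i * Real.exp (-2 ^ i / 2)) := by gcongr

lemma one_sub_pow_le_exp_neg_mul {x : ℝ} (hx : x ≤ 1) (k : ℕ) :
    (1 - x) ^ k ≤ Real.exp (-(k * x)) := by
  rw [← mul_neg, Real.exp_nat_mul]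
  exact pow_le_pow_left₀ (by linarith) (Real.one_sub_le_exp_neg x) k

lemma ENNReal.tsum_ne_top_of_le_mul {α : Type*} {f g : α → ENNReal} {c : ENNReal} (hc : c ≠ ⊤)
    (h : ∀ i, f i ≤ c * g i) (hg : ∑' i, g i ≠ ⊤) : ∑' i, f i ≠ ⊤ :=
  ne_top_of_le_ne_top (ENNReal.mul_ne_top hc hg)
    ((ENNReal.tsum_le_tsum h).trans_eq ENNReal.tsum_mul_left)

lemma summable_iff_tsum_ofReal_ne_top {α : Type*} {f : α → ℝ} (hf : ∀ i, 0 ≤ f i) :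
    Summable f ↔ ∑' i, ENNReal.ofReal (f i) ≠ ⊤ :=
  ⟨Summable.tsum_ofReal_ne_top, fun h =>
    (ENNReal.summable_toReal h).congr fun i => ENNReal.toReal_ofReal (hf i)⟩

lemma lintegral_Ico_ofReal_le {f : ℝ → ℝ} {a b M : ℝ} (hM : 0 ≤ M)
    (hf : ∀ x ∈ Ico a b, f x ≤ M) :
    ∫⁻ x in Ico a b, ENNReal.ofReal (f x) ≤ ENNReal.ofReal (M * (b - a)) :=
  calc ∫⁻ x in Ico a b, ENNReal.ofReal (f x) ≤ ∫⁻ _ in Ico a b, ENNReal.ofReal M :=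
        setLIntegral_mono' measurableSet_Ico fun x hx => ENNReal.ofReal_le_ofReal (hf x hx)
    _ = ENNReal.ofReal (M * (b - a)) := by
        rw [setLIntegral_const, Real.volume_Ico, ENNReal.ofReal_mul hM]

lemma ofReal_le_lintegral_Ico {f : ℝ → ℝ} {a b M : ℝ} (hM : 0 ≤ M)
    (hf : ∀ x ∈ Ico a b, M ≤ f x) :
    ENNReal.ofReal (M * (b - a)) ≤ ∫⁻ x in Ico a b, ENNReal.ofReal (f x) :=
  calc ENNReal.ofReal (M * (b - a)) = ∫⁻ _ in Ico a b, ENNReal.ofReal M := by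
        rw [setLIntegral_const, Real.volume_Ico, ENNReal.ofReal_mul hM]
    _ ≤ ∫⁻ x in Ico a b, ENNReal.ofReal (f x) :=
        setLIntegral_mono' measurableSet_Ico fun x hx => ENNReal.ofReal_le_ofReal (hf x hx)

lemma ofReal_one_div_mul_rpow_le {N y z c b : ℝ} (hN : 0 < N) (hy : 0 < y) (hz : 0 < z)
    (hb : 0 ≤ b) (h : y ≤ c * z) :
    ENNReal.ofReal (1 / (N * z ^ b)) ≤
      ENNReal.ofReal (c ^ b) * ENNReal.ofReal (1 / (N * y ^ b)) := by
  have hc : 0 < c := pos_of_mul_pos_left (hy.trans_le h) hz.le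
  rw [← ENNReal.ofReal_mul (by positivity)]
  refine ENNReal.ofReal_le_ofReal ?_
  calc 1 / (N * z ^ b) = c ^ b * (1 / (N * (c * z) ^ b)) := by
        rw [Real.mul_rpow hc.le hz.le]; field_simp
    _ ≤ c ^ b * (1 / (N * y ^ b)) := by gcongr

lemma one_div_rpow_div_rpow_mul_sq {N y : ℝ} (hN : 0 < N) (hy : 0 < y) (a b : ℝ) :
    (1 / N) ^ a / y ^ b * (1 / N) ^ 2 = 1 / (N ^ (2 + a) * y ^ b) := by
  rw [Real.rpow_add hN, Real.div_rpow zero_le_one hN.le, Real.one_rpow, Real.rpow_two]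
  field_simp

lemma one_div_two_mul_rpow {N y : ℝ} (hN : 0 < N) (hy : 0 < y) (a b : ℝ) :
    1 / (N ^ (2 + a) * y ^ b) = 2 ^ (2 + a) * (1 / ((2 * N) ^ (2 + a) * y ^ b)) := by
  rw [Real.mul_rpow zero_le_two hN.le]
  field_simp

noncomputable def gridPoint (k : ℕ) : ℝ := 1 - 1 / ((k : ℝ) + 1)

lemma one_sub_gridPoint (k : ℕ) : 1 - gridPoint k = 1 / ((k : ℝ) + 1) := sub_sub_cancel _ _

lemma gridPoint_mem_Ico (k : ℕ) : gridPoint k ∈ Ico (0:ℝ) 1 := by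
  have hk : (1:ℝ) ≤ k + 1 := by linarith [k.cast_nonneg (α := ℝ)]
  refine ⟨?_, ?_⟩ <;> unfold gridPoint
  · linarith [(div_le_one (by positivity)).2 hk]
  · linarith [(one_div_pos.2 (by positivity : (0:ℝ) < k + 1))]

lemma gridPoint_mono : Monotone gridPoint := by
  refine monotone_nat_of_le_succ fun k => ?_
  unfold gridPoint
  gcongr
  norm_num

lemma iUnion_Ico_gridPoint : ⋃ k, Ico (gridPoint k) (gridPoint (k + 1)) = Ico 0 1 := by
  refine Subset.antisymm (iUnion_subset fun k => Ico_subset_Ico (gridPoint_mem_Ico k).1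
    (gridPoint_mem_Ico _).2.le) fun x ⟨hx₀, hx₁⟩ => mem_iUnion.2 ?_
  -- `gridPoint k ≤ x ↔ k ≤ x / (1 - x)`
  have h1x : 0 < 1 - x := by linarith
  refine ⟨⌊x / (1 - x)⌋₊, ?_, ?_⟩ <;> simp only [gridPoint] <;> push_cast
  · have := Nat.floor_le (div_nonneg hx₀ h1x.le)
    rw [sub_le_comm, le_div_iff₀ (by positivity)]
    rw [le_div_iff₀ h1x] at this
    nlinarith
  · have := Nat.lt_floor_add_one (x / (1 - x))
    rw [lt_sub_comm, div_lt_iff₀ (by positivity)]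
    rw [div_lt_iff₀ h1x] at this
    nlinarith

lemma one_third_le_gridPoint_pow (k : ℕ) : 1 / 3 ≤ gridPoint k ^ k := by
  rcases Nat.eq_zero_or_pos k with rfl | hk
  · norm_num
  have hgrid : gridPoint k = (1 + (k : ℝ)⁻¹)⁻¹ := by
    unfold gridPoint; field_simp; ring
  rw [hgrid, inv_pow, one_div]
  gcongr
  exact Real.one_add_inv_pow_le_exp.trans (Real.exp_one_lt_d9.le.trans (by norm_num))

lemma one_sub_mem_Icc_of_mem_Ico_gridPoint {k : ℕ} {x : ℝ}
    (hx : x ∈ Ico (gridPoint k) (gridPoint (k + 1))) :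
    1 - x ∈ Icc (1 / (2 * ((k:ℝ) + 1))) (1 / ((k:ℝ) + 1)) := by
  obtain ⟨hlo, hhi⟩ := hx
  have hsucc := one_sub_gridPoint (k + 1)
  push_cast at hsucc
  have hhalf : 1 / (2 * ((k:ℝ) + 1)) ≤ 1 / ((k:ℝ) + 1 + 1) := by
    gcongr; linarith [k.cast_nonneg (α := ℝ)]
  rw [← one_sub_gridPoint]
  exact ⟨by linarith, by linarith⟩

lemma gridPoint_succ_sub_mem_Icc (k : ℕ) :
    gridPoint (k + 1) - gridPoint k ∈
      Icc ((1 / (2 * ((k:ℝ) + 1))) ^ 2) ((1 / ((k:ℝ) + 1)) ^ 2) := by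
  have hk : (0:ℝ) ≤ k := k.cast_nonneg
  have hlen : gridPoint (k + 1) - gridPoint k = 1 / (((k:ℝ) + 1) * ((k:ℝ) + 2)) := by
    unfold gridPoint; push_cast; field_simp; ring
  rw [hlen, one_div_pow, one_div_pow]
  constructor <;> apply one_div_le_one_div_of_le (by positivity) <;> nlinarith

noncomputable def tailIntegral (ω : ℝ → ℝ) (r : ℝ) : ℝ := ∫ s in Ioc r 1, ω s

noncomputable def weightMoment (ω : ℝ → ℝ) (k : ℕ) : ℝ := ∫ s in Ioc 0 1, s ^ k * ω s

section Weight

variable {ω : ℝ → ℝ}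

lemma tailIntegral_nonneg (hω₀ : ∀ r, 0 ≤ ω r) (r : ℝ) : 0 ≤ tailIntegral ω r :=
  setIntegral_nonneg measurableSet_Ioc fun s _ => hω₀ s

lemma tailIntegral_antitoneOn (hω₀ : ∀ r, 0 ≤ ω r) (hω : IntegrableOn ω (Ioc 0 1)) :
    AntitoneOn (tailIntegral ω) (Ici 0) := fun _ ha _ _ hab =>
  setIntegral_mono_set (hω.mono_set (Ioc_subset_Ioc_left ha)) (.of_forall hω₀)
    (Ioc_subset_Ioc_left hab).eventuallyLE

lemma integrableOn_pow_mul (hω : IntegrableOn ω (Ioc 0 1)) (k : ℕ) :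
    IntegrableOn (fun s => s ^ k * ω s) (Ioc 0 1) :=
  hω.continuousOn_mul_of_subset (continuous_pow k).continuousOn isCompact_Icc measurableSet_Ioc
    Ioc_subset_Icc_self

lemma integral_Ioc_pow_mul_le (hω₀ : ∀ r, 0 ≤ ω r) (hω : IntegrableOn ω (Ioc 0 1))
    {a b : ℝ} (ha : 0 ≤ a) (hab : a ≤ b) (hb : b ≤ 1) (k : ℕ) :
    ∫ s in Ioc a b, s ^ k * ω s ≤ b ^ k * tailIntegral ω a := by
  have hsub : Ioc a b ⊆ Ioc 0 1 := Ioc_subset_Ioc ha hb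
  calc ∫ s in Ioc a b, s ^ k * ω s ≤ ∫ s in Ioc a b, b ^ k * ω s := by
        refine setIntegral_mono_on ((integrableOn_pow_mul hω k).mono_set hsub)
          ((hω.mono_set hsub).const_mul _) measurableSet_Ioc fun s hs => ?_
        gcongr
        exacts [hω₀ s, ha.trans hs.1.le, hs.2]
    _ = b ^ k * ∫ s in Ioc a b, ω s := integral_const_mul _ _
    _ ≤ b ^ k * tailIntegral ω a := by
        gcongr
        · exact pow_nonneg (ha.trans hab) k
        · exact setIntegral_mono_set (hω.mono_set (Ioc_subset_Ioc_left ha)) (.of_forall hω₀)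
            (Ioc_subset_Ioc_right hb).eventuallyLE

lemma pow_mul_tailIntegral_le_weightMoment (hω₀ : ∀ r, 0 ≤ ω r)
    (hω : IntegrableOn ω (Ioc 0 1)) {t : ℝ} (ht₀ : 0 ≤ t) (k : ℕ) :
    t ^ k * tailIntegral ω t ≤ weightMoment ω k := by
  have hsub : Ioc t 1 ⊆ Ioc 0 1 := Ioc_subset_Ioc_left ht₀
  calc t ^ k * tailIntegral ω t = ∫ s in Ioc t 1, t ^ k * ω s :=
        (integral_const_mul _ _).symm
    _ ≤ ∫ s in Ioc t 1, s ^ k * ω s := by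
        refine setIntegral_mono_on ((hω.mono_set hsub).const_mul _)
          ((integrableOn_pow_mul hω k).mono_set hsub) measurableSet_Ioc fun s hs => ?_
        gcongr
        exacts [hω₀ s, hs.1.le]
    _ ≤ weightMoment ω k :=
        setIntegral_mono_set (integrableOn_pow_mul hω k)
          ((ae_restrict_iff' measurableSet_Ioc).2 (.of_forall fun s hs =>
            mul_nonneg (pow_nonneg hs.1.le k) (hω₀ s)))
          hsub.eventuallyLE

lemma weightMoment_le_sum (hω₀ : ∀ r, 0 ≤ ω r) (hω : IntegrableOn ω (Ioc 0 1))
    {t : ℕ → ℝ} (ht : Monotone t) (ht₀ : t 0 = 0) {m : ℕ} (htm : t m ≤ 1) (k : ℕ) :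
    weightMoment ω k ≤
      ∑ j ∈ Finset.range m, t (j + 1) ^ k * tailIntegral ω (t j) + tailIntegral ω (t m) := by
  have ht_nonneg : ∀ j, 0 ≤ t j := fun j => ht₀ ▸ ht (Nat.zero_le j)
  have hint : ∀ {a b}, 0 ≤ a → a ≤ b → b ≤ 1 →
      IntervalIntegrable (fun s => s ^ k * ω s) volume a b := fun ha hab hb =>
    (intervalIntegrable_iff_integrableOn_Ioc_of_le hab).2
      ((integrableOn_pow_mul hω k).mono_set (Ioc_subset_Ioc ha hb))
  have hpiece : ∀ {a b}, 0 ≤ a → a ≤ b → b ≤ 1 →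
      ∫ s in a..b, s ^ k * ω s ≤ b ^ k * tailIntegral ω a := fun ha hab hb => by
    rw [intervalIntegral.integral_of_le hab]
    exact integral_Ioc_pow_mul_le hω₀ hω ha hab hb k
  have hmono : ∀ j ≤ m, t j ≤ 1 := fun j hj => (ht hj).trans htm
  rw [weightMoment, ← intervalIntegral.integral_of_le zero_le_one,
    ← intervalIntegral.integral_add_adjacent_intervals (b := t m)
      (hint le_rfl (ht_nonneg m) htm) (hint (ht_nonneg m) htm le_rfl),
    ← ht₀, ← intervalIntegral.sum_integral_adjacent_intervals fun j hj =>
      hint (ht_nonneg j) (ht j.le_succ) (hmono _ hj)]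
  gcongr with j hj
  · exact hpiece (ht_nonneg j) (ht j.le_succ) (hmono _ (Finset.mem_range.1 hj))
  · simpa using hpiece (ht_nonneg m) htm le_rfl

lemma tailIntegral_le_pow_mul (hω₀ : ∀ r, 0 ≤ ω r) (hω : IntegrableOn ω (Ioc 0 1))
    {C : ℝ} (hC : 0 ≤ C)
    (hD : ∀ r ∈ Ico (0:ℝ) 1, tailIntegral ω r ≤ C * tailIntegral ω ((1 + r) / 2))
    {r t : ℝ} (hr : r ∈ Ico (0:ℝ) 1) (ht : 0 ≤ t) {d : ℕ} (hrt : 1 - r ≤ 2 ^ d * (1 - t)) :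
    tailIntegral ω r ≤ C ^ d * tailIntegral ω t := by
  induction d generalizing r with
  | zero =>
    rw [pow_zero, one_mul] at hrt ⊢
    exact tailIntegral_antitoneOn hω₀ hω ht hr.1 (by linarith)
  | succ d ih =>
    have hmid : (1 + r) / 2 ∈ Ico (0:ℝ) 1 := ⟨by linarith [hr.1], by linarith [hr.2]⟩
    calc tailIntegral ω r ≤ C * tailIntegral ω ((1 + r) / 2) := hD r hr
      _ ≤ C * (C ^ d * tailIntegral ω t) := by
          gcongr
          exact ih hmid (by rw [pow_succ] at hrt; linarith)
      _ = C ^ (d + 1) * tailIntegral ω t := by ring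

lemma tailIntegral_one_sub_inv_two_pow_le (hω₀ : ∀ r, 0 ≤ ω r)
    (hω : IntegrableOn ω (Ioc 0 1)) {C : ℝ} (hC : 0 ≤ C)
    (hD : ∀ r ∈ Ico (0:ℝ) 1, tailIntegral ω r ≤ C * tailIntegral ω ((1 + r) / 2))
    {j d k : ℕ} (hk : (k:ℝ) + 1 ≤ 2 ^ (j + d)) :
    tailIntegral ω (1 - 2⁻¹ ^ j) ≤ C ^ d * tailIntegral ω (gridPoint k) := by
  refine tailIntegral_le_pow_mul hω₀ hω hC hD
    ⟨sub_nonneg.2 (pow_le_one₀ (by norm_num) (by norm_num)), sub_lt_self 1 (by positivity)⟩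
    (gridPoint_mem_Ico k).1 ?_
  rw [one_sub_gridPoint, sub_sub_cancel, inv_pow, mul_one_div,
    inv_le_iff_one_le_mul₀ (by positivity), div_mul_eq_mul_div, one_le_div (by positivity),
    ← pow_add, add_comm d j]
  exact hk

lemma one_sub_inv_two_pow_pow_le_exp {i j k : ℕ} (hk : (2:ℝ) ^ (i + j + 1) ≤ k + 1) :
    (1 - 2⁻¹ ^ (j + 1)) ^ k ≤ Real.exp (-2 ^ i / 2) := by
  refine (one_sub_pow_le_exp_neg_mul (pow_le_one₀ (by norm_num) (by norm_num)) k).trans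
    (Real.exp_le_exp.2 ?_)
  have hone : (1:ℝ) ≤ 2 ^ i * 2 ^ j := one_le_mul_of_one_le_of_one_le
    (one_le_pow₀ one_le_two) (one_le_pow₀ one_le_two)
  rw [pow_succ, pow_add] at hk
  have : (2:ℝ) ^ i / 2 ≤ k * 2⁻¹ ^ (j + 1) := by
    rw [inv_pow, ← div_eq_mul_inv, le_div_iff₀ (by positivity), pow_succ]
    nlinarith
  linarith

lemma exists_weightMoment_le_mul_tailIntegral (hω₀ : ∀ r, 0 ≤ ω r)
    (hω : IntegrableOn ω (Ioc 0 1)) {C : ℝ} (hC : 0 ≤ C)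
    (hD : ∀ r ∈ Ico (0:ℝ) 1, tailIntegral ω r ≤ C * tailIntegral ω ((1 + r) / 2)) :
    ∃ K, ∀ k : ℕ, weightMoment ω k ≤ K * tailIntegral ω (gridPoint k) := by
  set φ : ℕ → ℝ := fun i => C ^ i * Real.exp (-2 ^ i / 2)
  refine ⟨C ^ 2 * ∑' i, φ i + C, fun k => ?_⟩
  set T := tailIntegral ω (gridPoint k)
  -- split `(0, 1]` at the dyadic points `1 - 2⁻ʲ`, `j ≤ m`, where `2 ^ m ≤ k + 1 < 2 ^ (m + 1)`
  set m := Nat.log 2 (k + 1)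
  have hm_le : (2:ℝ) ^ m ≤ k + 1 := by exact_mod_cast Nat.pow_log_le_self 2 k.succ_ne_zero
  have hm_lt : (k:ℝ) + 1 < 2 ^ (m + 1) := by
    exact_mod_cast Nat.lt_pow_succ_log_self one_lt_two _
  set t : ℕ → ℝ := fun j => 1 - 2⁻¹ ^ j
  have ht : Monotone t := fun i j hij =>
    sub_le_sub_left (pow_le_pow_of_le_one (by norm_num) (by norm_num) hij) 1
  have htail : ∀ {j d : ℕ}, m + 1 ≤ j + d → tailIntegral ω (t j) ≤ C ^ d * T := fun hjd =>
    tailIntegral_one_sub_inv_two_pow_le hω₀ hω hC hD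
      (hm_lt.le.trans (pow_le_pow_right₀ one_le_two hjd))
  have hhead : ∀ j < m, t (j + 1) ^ k * tailIntegral ω (t j) ≤ C ^ 2 * φ (m - 1 - j) * T := by
    intro j hj
    obtain ⟨i, hi⟩ : ∃ i, m = i + j + 1 := ⟨m - 1 - j, by omega⟩
    rw [show m - 1 - j = i by omega,
      show C ^ 2 * φ i * T = Real.exp (-2 ^ i / 2) * (C ^ (i + 2) * T) by simp only [φ]; ring]
    exact mul_le_mul (one_sub_inv_two_pow_pow_le_exp (hi ▸ hm_le)) (htail (by omega))
      (tailIntegral_nonneg hω₀ _) (by positivity)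
  calc weightMoment ω k
      ≤ ∑ j ∈ Finset.range m, t (j + 1) ^ k * tailIntegral ω (t j) + tailIntegral ω (t m) :=
        weightMoment_le_sum hω₀ hω ht (by simp [t]) (by simp [t]) k
    _ ≤ ∑ j ∈ Finset.range m, C ^ 2 * φ (m - 1 - j) * T + C ^ 1 * T :=
        add_le_add (Finset.sum_le_sum fun j hj => hhead j (Finset.mem_range.1 hj))
          (htail (by omega))
    _ = C ^ 2 * (∑ i ∈ Finset.range m, φ i) * T + C * T := by
        rw [← Finset.sum_mul, ← Finset.mul_sum, Finset.sum_range_reflect, pow_one]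
    _ ≤ (C ^ 2 * ∑' i, φ i + C) * T := by
        rw [add_mul]
        gcongr
        · exact tailIntegral_nonneg hω₀ _
        · exact (summable_pow_mul_exp_neg_two_pow hC).sum_le_tsum _ fun i _ => by positivity

lemma lintegral_Ico_gridPoint_le {F : ℝ → ℝ} {C T a b : ℝ} (k : ℕ) (ha : 0 ≤ a) (hb : 0 ≤ b)
    (hC : 0 < C) (hT : 0 < T) (hF : ∀ x ∈ Ico (gridPoint k) (gridPoint (k + 1)), T ≤ C * F x) :
    ∫⁻ x in Ico (gridPoint k) (gridPoint (k + 1)), ENNReal.ofReal ((1 - x) ^ a / F x ^ b) ≤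
      ENNReal.ofReal (C ^ b) * ENNReal.ofReal (1 / (((k:ℝ) + 1) ^ (2 + a) * T ^ b)) := by
  have hN : (0:ℝ) < k + 1 := by positivity
  have hTC : 0 < T / C := div_pos hT hC
  have hpoint : ∀ x ∈ Ico (gridPoint k) (gridPoint (k + 1)),
      (1 - x) ^ a / F x ^ b ≤ (1 / ((k:ℝ) + 1)) ^ a / (T / C) ^ b := fun x hx => by
    have h1x := one_sub_mem_Icc_of_mem_Ico_gridPoint hx
    have hFx : T / C ≤ F x := (div_le_iff₀' hC).2 (hF x hx)
    gcongr
    exacts [(one_div_pos.2 (by positivity)).le.trans h1x.1, h1x.2]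
  calc _ ≤ ENNReal.ofReal ((1 / ((k:ℝ) + 1)) ^ a / (T / C) ^ b *
          (gridPoint (k + 1) - gridPoint k)) :=
        lintegral_Ico_ofReal_le (by positivity) hpoint
    _ ≤ ENNReal.ofReal (1 / (((k:ℝ) + 1) ^ (2 + a) * (T / C) ^ b)) := by
        rw [← one_div_rpow_div_rpow_mul_sq hN hTC]
        gcongr
        exact (gridPoint_succ_sub_mem_Icc k).2
    _ ≤ _ := ofReal_one_div_mul_rpow_le (by positivity) hT hTC hb (mul_div_cancel₀ T hC.ne').ge

lemma ofReal_le_lintegral_Ico_gridPoint {F : ℝ → ℝ} {T a b : ℝ} (k : ℕ) (ha : 0 ≤ a)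
    (hb : 0 ≤ b) (hT : 0 < T)
    (hF : ∀ x ∈ Ico (gridPoint k) (gridPoint (k + 1)), 0 < F x ∧ F x ≤ T) :
    ENNReal.ofReal (1 / (((k:ℝ) + 1) ^ (2 + a) * T ^ b)) ≤
      ENNReal.ofReal (2 ^ (2 + a)) *
        ∫⁻ x in Ico (gridPoint k) (gridPoint (k + 1)), ENNReal.ofReal ((1 - x) ^ a / F x ^ b) := by
  have hN : (0:ℝ) < 2 * (k + 1) := by positivity
  have hpoint : ∀ x ∈ Ico (gridPoint k) (gridPoint (k + 1)),
      (1 / (2 * ((k:ℝ) + 1))) ^ a / T ^ b ≤ (1 - x) ^ a / F x ^ b := fun x hx => by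
    have h1x := one_sub_mem_Icc_of_mem_Ico_gridPoint hx
    obtain ⟨hFx, hFT⟩ := hF x hx
    gcongr
    · exact Real.rpow_nonneg ((one_div_pos.2 hN).le.trans h1x.1) a
    · exact h1x.1
  rw [one_div_two_mul_rpow (by positivity) hT, ENNReal.ofReal_mul (by positivity)]
  gcongr
  calc ENNReal.ofReal (1 / ((2 * ((k:ℝ) + 1)) ^ (2 + a) * T ^ b))
      = ENNReal.ofReal ((1 / (2 * ((k:ℝ) + 1))) ^ a / T ^ b * (1 / (2 * ((k:ℝ) + 1))) ^ 2) := by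
        rw [one_div_rpow_div_rpow_mul_sq hN hT]
    _ ≤ ENNReal.ofReal ((1 / (2 * ((k:ℝ) + 1))) ^ a / T ^ b *
          (gridPoint (k + 1) - gridPoint k)) := by
        gcongr
        exact (gridPoint_succ_sub_mem_Icc k).1
    _ ≤ _ := ofReal_le_lintegral_Ico (by positivity) hpoint

lemma tailIntegral_gridPoint_le_three_mul_weightMoment (hω₀ : ∀ r, 0 ≤ ω r)
    (hω : IntegrableOn ω (Ioc 0 1)) (k : ℕ) :
    tailIntegral ω (gridPoint k) ≤ 3 * weightMoment ω k := by
  have := pow_mul_tailIntegral_le_weightMoment hω₀ hω (gridPoint_mem_Ico k).1 k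
  nlinarith [one_third_le_gridPoint_pow k, tailIntegral_nonneg hω₀ (gridPoint k)]

lemma tailIntegral_gridPoint_le_mul_of_mem_Ico (hω₀ : ∀ r, 0 ≤ ω r)
    (hω : IntegrableOn ω (Ioc 0 1)) {C : ℝ} (hC : 0 ≤ C)
    (hD : ∀ r ∈ Ico (0:ℝ) 1, tailIntegral ω r ≤ C * tailIntegral ω ((1 + r) / 2))
    {k : ℕ} {x : ℝ} (hx : x ∈ Ico (gridPoint k) (gridPoint (k + 1))) :
    tailIntegral ω (gridPoint k) ≤ C * tailIntegral ω x := by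
  have h := (one_sub_mem_Icc_of_mem_Ico_gridPoint hx).1
  rw [mul_comm, ← div_div, ← one_sub_gridPoint] at h
  simpa using tailIntegral_le_pow_mul hω₀ hω hC hD (d := 1) (gridPoint_mem_Ico k)
    ((gridPoint_mem_Ico k).1.trans hx.1) (by linarith)

lemma aestronglyMeasurable_one_sub_rpow_div_tailIntegral_rpow (hω₀ : ∀ r, 0 ≤ ω r)
    (hω : IntegrableOn ω (Ioc 0 1)) (a b : ℝ) :
    AEStronglyMeasurable (fun r => (1 - r) ^ a / tailIntegral ω r ^ b)
      (volume.restrict (Ioo 0 1)) := by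
  have hanti : AntitoneOn (tailIntegral ω) (Ioo 0 1) :=
    (tailIntegral_antitoneOn hω₀ hω).mono fun _ hx => hx.1.le
  refine (AEMeasurable.div ?_ ?_).aestronglyMeasurable
  · exact ((measurable_const.sub measurable_id).pow_const a).aemeasurable
  · exact (aemeasurable_restrict_of_antitoneOn measurableSet_Ioo hanti).pow_const b

lemma integrableOn_Ioo_iff_tsum_lintegral_Ico_gridPoint_ne_top {f : ℝ → ℝ}
    (hf : AEStronglyMeasurable f (volume.restrict (Ioo 0 1))) (hf₀ : ∀ x ∈ Ioo (0:ℝ) 1, 0 ≤ f x) :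
    IntegrableOn f (Ioo 0 1) ↔
      ∑' k, ∫⁻ x in Ico (gridPoint k) (gridPoint (k + 1)), ENNReal.ofReal (f x) ≠ ⊤ := by
  rw [IntegrableOn, ← lintegral_ofReal_ne_top_iff_integrable hf
      (ae_restrict_of_forall_mem measurableSet_Ioo hf₀),
    Measure.restrict_congr_set Ioo_ae_eq_Ico, ← iUnion_Ico_gridPoint,
    lintegral_iUnion (fun k => measurableSet_Ico) (by
      simpa only [Order.succ_eq_add_one] using gridPoint_mono.pairwise_disjoint_on_Ico_succ)]

theorem integrableOn_one_sub_rpow_div_tailIntegral_rpow_iff_summable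
    (hω₀ : ∀ r, 0 ≤ ω r) (hω : IntegrableOn ω (Ioc 0 1))
    (hpos : ∀ r ∈ Ico (0:ℝ) 1, 0 < tailIntegral ω r) {C : ℝ} (hC : 0 < C)
    (hD : ∀ r ∈ Ico (0:ℝ) 1, tailIntegral ω r ≤ C * tailIntegral ω ((1 + r) / 2))
    {a b : ℝ} (ha : 0 ≤ a) (hb : 0 ≤ b) :
    IntegrableOn (fun r => (1 - r) ^ a / tailIntegral ω r ^ b) (Ioo 0 1) ↔
      Summable fun k : ℕ => 1 / (((k:ℝ) + 1) ^ (2 + a) * weightMoment ω k ^ b) := by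
  set T : ℕ → ℝ := fun k => tailIntegral ω (gridPoint k)
  have hT : ∀ k, 0 < T k := fun k => hpos _ (gridPoint_mem_Ico k)
  have hT_le := tailIntegral_gridPoint_le_three_mul_weightMoment hω₀ hω
  have hM : ∀ k, 0 < weightMoment ω k := fun k => by linarith [hT k, hT_le k]
  obtain ⟨K, hM_le⟩ := exists_weightMoment_le_mul_tailIntegral hω₀ hω hC.le hD
  have hpiece : ∀ k, ∀ x ∈ Ico (gridPoint k) (gridPoint (k + 1)),
      0 < tailIntegral ω x ∧ tailIntegral ω x ≤ T k := fun k x hx => by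
    have hx₀ : 0 ≤ x := (gridPoint_mem_Ico k).1.trans hx.1
    exact ⟨hpos x ⟨hx₀, hx.2.trans_le (gridPoint_mem_Ico _).2.le⟩,
      tailIntegral_antitoneOn hω₀ hω (gridPoint_mem_Ico k).1 hx₀ hx.1⟩
  have hnonneg : ∀ x ∈ Ioo (0:ℝ) 1, 0 ≤ (1 - x) ^ a / tailIntegral ω x ^ b := fun x hx =>
    div_nonneg (Real.rpow_nonneg (by linarith [hx.2]) _)
      (Real.rpow_nonneg (tailIntegral_nonneg hω₀ x) _)
  rw [integrableOn_Ioo_iff_tsum_lintegral_Ico_gridPoint_ne_top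
      (aestronglyMeasurable_one_sub_rpow_div_tailIntegral_rpow hω₀ hω a b) hnonneg,
    summable_iff_tsum_ofReal_ne_top fun k =>
      one_div_nonneg.2 (mul_nonneg (by positivity) (Real.rpow_nonneg (hM k).le _))]
  calc _ ↔ ∑' k : ℕ, ENNReal.ofReal (1 / (((k:ℝ) + 1) ^ (2 + a) * T k ^ b)) ≠ ⊤ :=
        ⟨ENNReal.tsum_ne_top_of_le_mul ENNReal.ofReal_ne_top fun k =>
          ofReal_le_lintegral_Ico_gridPoint k ha hb (hT k) (hpiece k),
        ENNReal.tsum_ne_top_of_le_mul ENNReal.ofReal_ne_top fun k =>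
          lintegral_Ico_gridPoint_le k ha hb hC (hT k) fun _ =>
            tailIntegral_gridPoint_le_mul_of_mem_Ico hω₀ hω hC.le hD⟩
    _ ↔ _ :=
        ⟨ENNReal.tsum_ne_top_of_le_mul ENNReal.ofReal_ne_top fun k =>
          ofReal_one_div_mul_rpow_le (by positivity) (hT k) (hM k) hb (hT_le k),
        ENNReal.tsum_ne_top_of_le_mul ENNReal.ofReal_ne_top fun k =>
          ofReal_one_div_mul_rpow_le (by positivity) (hM k) (hT k) hb (hM_le k)⟩

end Weight

/-- For 1 < p < ∞, p' = p/(p-1) and ω ∈ D̂: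
∫_0^1 (1-r)^{p'}/ω̂(r)^{p'-1} dr = ∞ iff Σ_k 1/((k+1)^{2+p'} ω_k^{p'-1}) = ∞. -/
theorem stmt_18 (p p' : ℝ) (hp : 1 < p) (hp' : p' = p / (p - 1))
    (ω : ℝ → ℝ) (hnn : ∀ r, 0 ≤ ω r)
    (hInt : IntegrableOn ω (Set.Ico (0:ℝ) 1))
    (What : ℝ → ℝ) (hWhat : ∀ r, What r = ∫ s in Set.Ioc r 1, ω s)
    (hpos : ∀ r ∈ Set.Ico (0:ℝ) 1, 0 < What r)
    (hD : ∃ C ≥ (1:ℝ), ∀ r ∈ Set.Ico (0:ℝ) 1, What r ≤ C * What ((1 + r) / 2))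
    (mom : ℝ → ℝ) (hmom : ∀ x, mom x = ∫ s in Set.Ioc (0:ℝ) 1, s ^ x * ω s) :
    (¬ IntegrableOn (fun r : ℝ => (1 - r) ^ p' / What r ^ (p' - 1))
        (Set.Ioo (0:ℝ) 1)) ↔
    ¬ Summable (fun k : ℕ => 1 / (((k : ℝ) + 1) ^ (2 + p') * mom (k : ℝ) ^ (p' - 1))) := by
  obtain ⟨C, hC, hD⟩ := hD
  obtain rfl : What = tailIntegral ω := funext hWhat
  have hp'_ge : 1 ≤ p' := by rw [hp', le_div_iff₀ (by linarith)]; linarith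
  have hmom_nat : ∀ k : ℕ, mom k = weightMoment ω k := fun k => by
    simp only [hmom, weightMoment, Real.rpow_natCast]
  have hω : IntegrableOn ω (Ioc 0 1) :=
    (integrableOn_Ioc_iff_integrableOn_Ioo enorm_ne_top).2
      ((integrableOn_Ico_iff_integrableOn_Ioo enorm_ne_top).1 hInt)
  simp only [hmom_nat]
  exact (integrableOn_one_sub_rpow_div_tailIntegral_rpow_iff_summable hnn hω hpos
    (by linarith) hD (by linarith) (by linarith)).not
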